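/- arXiv:1207.0118 — 2 statements merged into one kernel-verified Lean document; each statement's English description precedes it below -/
import Mathlib

section
/- Let F be an order filter on Setoid I, let Ω(A)^F = {f : I → A | ker f ∈ F}, and let θ be a congruence on Ω(A)^F. Define Z to be the set of all R ∈ 𝔅(F) such that for all f, g ∈ Ω(A)^F, if f and g agree on R then θ f g. Then: (i) Z is a filter on the Boolean algebra 𝔅(F), i.e., Z is closed under binary intersections and is upward closed within 𝔅(F); and (ii) for all f, g ∈ Ω(A)^F, θ f g holds if and only if {i ∈ I | f i = g i} ∈ Z. -/
/-- `𝔅(F)`: the collection of subsets of `I` consisting of `∅` together with every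
equivalence class of every member of `F`. -/
def bAlg {I : Type*} (F : Set (Setoid I)) : Set (Set I) :=
  {R | R = ∅ ∨ ∃ s ∈ F, ∃ i : I, R = {j : I | s i j}}

/-- The set `Z` associated to a congruence `θ` on `Ω(A)^F`: all `R ∈ 𝔅(F)` such that any two
elements of `Ω(A)^F` agreeing on `R` are `θ`-related. -/
def Zset {A I : Type*} (F : Order.PFilter (Setoid I))
    (θ : {f : I → A // Setoid.ker f ∈ F} → {f : I → A // Setoid.ker f ∈ F} → Prop) :
    Set (Set I) :=
  {R ∈ bAlg (F : Set (Setoid I)) |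
    ∀ f g : {f : I → A // Setoid.ker f ∈ F}, (∀ i ∈ R, f.1 i = g.1 i) → θ f g}

/-!
A congruence can test equality of coordinates: the pointwise operation
`x ↦ if x 0 = x 1 then x 2 else x 3` sends `(f, f, f', g')` and `(f, g, f', g')` to `f'` and `g'`,
so `θ f g` implies `θ f' g'` whenever `f'` and `g'` agree wherever `f` and `g` do. Hence `θ f g`
holds iff the equalizer of `f` and `g` lies in `Z`. For `R ∩ S`, the function equal to `g` on `S`
and to `f` elsewhere stays in `Ω(A)^F` because `S` is a class of a member of `F`; it is related
to `f` through `R` and to `g` through `S`.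
-/

open Order

section

variable {I : Type*}

theorem Setoid.setOf_rel_eq_of_rel (s : Setoid I) {i k : I} (h : s i k) :
    {j | s i j} = {j | s k j} :=
  Set.ext fun _ => ⟨s.trans' (s.symm' h), s.trans' h⟩

theorem Setoid.inf_ker_le_ker_piecewise {A : Type*} (f g : I → A) (S : Set I)
    [DecidablePred (· ∈ S)] :
    Setoid.ker f ⊓ Setoid.ker g ⊓ Setoid.ker (· ∈ S) ≤ Setoid.ker (S.piecewise g f) := by
  intro x y hxy
  simp only [Setoid.inf_iff_and, Setoid.ker_def] at hxy ⊢
  obtain ⟨⟨hf, hg⟩, hS⟩ := hxy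
  by_cases hx : x ∈ S
  · simp [Set.piecewise_eq_of_mem, hx, hS ▸ hx, hg]
  · have hy : y ∉ S := by simpa [hS] using hx
    simp [Set.piecewise_eq_of_notMem, hx, hy, hf]

section bAlg

variable {F : PFilter (Setoid I)}

theorem inter_mem_bAlg {R S : Set I} (hR : R ∈ bAlg (F : Set (Setoid I)))
    (hS : S ∈ bAlg (F : Set (Setoid I))) : R ∩ S ∈ bAlg (F : Set (Setoid I)) := by
  rcases hR with rfl | ⟨s, hs, i, rfl⟩
  · exact Or.inl (Set.empty_inter S)
  rcases hS with rfl | ⟨t, ht, i', rfl⟩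
  · exact Or.inl (Set.inter_empty _)
  rcases Set.eq_empty_or_nonempty ({j | s i j} ∩ {j | t i' j}) with hempty | ⟨k, hsk, htk⟩
  · exact Or.inl hempty
  refine Or.inr ⟨s ⊓ t, PFilter.inf_mem hs ht, k, ?_⟩
  rw [s.setOf_rel_eq_of_rel hsk, t.setOf_rel_eq_of_rel htk]
  ext j
  exact Setoid.inf_iff_and.symm

theorem preimage_singleton_mem_bAlg {B : Type*} {φ : I → B} (hφ : Setoid.ker φ ∈ F) (b : B) :
    φ ⁻¹' {b} ∈ bAlg (F : Set (Setoid I)) := by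
  rcases Set.eq_empty_or_nonempty (φ ⁻¹' {b}) with hempty | ⟨i, hi⟩
  · exact Or.inl hempty
  refine Or.inr ⟨_, hφ, i, ?_⟩
  ext j
  simp [Setoid.ker_def, Set.mem_singleton_iff.1 hi, eq_comm]

theorem ker_mem_of_mem_bAlg {S : Set I} (hS : S ∈ bAlg (F : Set (Setoid I))) :
    Setoid.ker (· ∈ S) ∈ F := by
  rcases hS with rfl | ⟨s, hs, i, rfl⟩
  · exact PFilter.mem_of_le (fun _ _ _ => by simp) PFilter.top_mem
  · refine PFilter.mem_of_le (fun x y hxy => ?_) hs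
    exact propext ⟨(s.trans' · hxy), (s.trans' · (s.symm' hxy))⟩

theorem eqLocus_mem_bAlg {A : Type*} {f g : I → A} (hf : Setoid.ker f ∈ F)
    (hg : Setoid.ker g ∈ F) : {i | f i = g i} ∈ bAlg (F : Set (Setoid I)) := by
  classical
  let φ : I → Option (A × A) := fun i => if f i = g i then none else some (f i, g i)
  have hφ : Setoid.ker φ ∈ F := PFilter.mem_of_le (fun x y hxy => by
    obtain ⟨hfxy, hgxy⟩ := Setoid.inf_iff_and.1 hxy
    simp only [Setoid.ker_def] at hfxy hgxy ⊢
    simp [φ, hfxy, hgxy]) (PFilter.inf_mem hf hg)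
  convert preimage_singleton_mem_bAlg hφ none using 1
  ext i
  by_cases h : f i = g i <;> simp [φ, h]

end bAlg

section Congruence

variable {A : Type*} {F : PFilter (Setoid I)}

def IsPointwiseCompatible
    (θ : {f : I → A // Setoid.ker f ∈ F} → {f : I → A // Setoid.ker f ∈ F} → Prop) : Prop :=
  ∀ (n : ℕ) (g : (Fin n → A) → A) (u v : Fin n → {f : I → A // Setoid.ker f ∈ F})
    (hu : Setoid.ker (fun i : I => g fun k => (u k).1 i) ∈ F)
    (hv : Setoid.ker (fun i : I => g fun k => (v k).1 i) ∈ F),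
    (∀ k, θ (u k) (v k)) → θ ⟨fun i => g fun k => (u k).1 i, hu⟩
      ⟨fun i => g fun k => (v k).1 i, hv⟩

variable {θ : {f : I → A // Setoid.ker f ∈ F} → {f : I → A // Setoid.ker f ∈ F} → Prop}

theorem rel_of_eqLocus_subset (hrefl : ∀ f, θ f f) (hθ : IsPointwiseCompatible θ)
    {f g f' g' : {f : I → A // Setoid.ker f ∈ F}} (hfg : θ f g)
    (hsub : ∀ i, f.1 i = g.1 i → f'.1 i = g'.1 i) : θ f' g' := by
  classical
  let G : (Fin 4 → A) → A := fun x => if x 0 = x 1 then x 2 else x 3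
  have hu : (fun i => G fun k => (![f, f, f', g'] k).1 i) = f'.1 := by
    funext i
    simp [G]
  have hv : (fun i => G fun k => (![f, g, f', g'] k).1 i) = g'.1 := by
    funext i
    by_cases hi : f.1 i = g.1 i <;> simp [G, hi, hsub i]
  have hrel : ∀ k, θ (![f, f, f', g'] k) (![f, g, f', g'] k) := by
    intro k
    fin_cases k <;> simp [hrefl _, hfg]
  convert hθ 4 G _ _ (hu ▸ f'.2) (hv ▸ g'.2) hrel using 2
  exacts [hu.symm, hv.symm]

theorem inter_mem_Zset (htrans : ∀ f g h, θ f g → θ g h → θ f h) {R S : Set I}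
    (hR : R ∈ Zset F θ) (hS : S ∈ Zset F θ) : R ∩ S ∈ Zset F θ := by
  classical
  refine ⟨inter_mem_bAlg hR.1 hS.1, fun f g hfg => ?_⟩
  let h : {f : I → A // Setoid.ker f ∈ F} :=
    ⟨S.piecewise g.1 f.1, PFilter.mem_of_le (Setoid.inf_ker_le_ker_piecewise f.1 g.1 S)
      (PFilter.inf_mem (PFilter.inf_mem f.2 g.2) (ker_mem_of_mem_bAlg hS.1))⟩
  have hfh : θ f h := hR.2 f h fun i hiR => by
    by_cases hiS : i ∈ S
    · simp [h, hiS, hfg i ⟨hiR, hiS⟩]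
    · simp [h, hiS]
  have hhg : θ h g := hS.2 h g fun i hiS => Set.piecewise_eq_of_mem _ _ _ hiS
  exact htrans f h g hfh hhg

theorem mem_Zset_of_subset {R S : Set I} (hR : R ∈ Zset F θ)
    (hS : S ∈ bAlg (F : Set (Setoid I))) (hRS : R ⊆ S) : S ∈ Zset F θ :=
  ⟨hS, fun f g hfg => hR.2 f g fun i hi => hfg i (hRS hi)⟩

theorem rel_iff_eqLocus_mem_Zset (hrefl : ∀ f, θ f f) (hθ : IsPointwiseCompatible θ)
    (f g : {f : I → A // Setoid.ker f ∈ F}) : θ f g ↔ {i | f.1 i = g.1 i} ∈ Zset F θ :=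
  ⟨fun hfg => ⟨eqLocus_mem_bAlg f.2 g.2,
      fun _ _ hsub => rel_of_eqLocus_subset hrefl hθ hfg hsub⟩,
    fun h => h.2 f g fun _ hi => hi⟩

end Congruence

end

theorem stmt_4_general (A : Type*) (I : Type*) (F : Order.PFilter (Setoid I))
    (θ : {f : I → A // Setoid.ker f ∈ F} → {f : I → A // Setoid.ker f ∈ F} → Prop)
    (hEquiv : Equivalence θ)
    (hCompat : ∀ (n : ℕ) (g : (Fin n → A) → A)
      (u v : Fin n → {f : I → A // Setoid.ker f ∈ F})
      (hu : Setoid.ker (fun i : I => g fun k => (u k).1 i) ∈ F)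
      (hv : Setoid.ker (fun i : I => g fun k => (v k).1 i) ∈ F),
      (∀ k, θ (u k) (v k)) → θ ⟨fun i => g fun k => (u k).1 i, hu⟩
        ⟨fun i => g fun k => (v k).1 i, hv⟩) :
    (∀ R ∈ Zset F θ, ∀ S ∈ Zset F θ, R ∩ S ∈ Zset F θ) ∧
    (∀ R ∈ Zset F θ, ∀ S ∈ bAlg (F : Set (Setoid I)), R ⊆ S → S ∈ Zset F θ) ∧
    (∀ f g : {f : I → A // Setoid.ker f ∈ F},
      θ f g ↔ {i : I | f.1 i = g.1 i} ∈ Zset F θ) :=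
  ⟨fun _ hR _ hS => inter_mem_Zset (θ := θ) (fun _ _ _ => hEquiv.trans) hR hS,
    fun _ hR _ hS hRS => mem_Zset_of_subset hR hS hRS,
    rel_iff_eqLocus_mem_Zset hEquiv.refl hCompat⟩

/-- Let `θ` be a congruence on `Ω(A)^F = {f : I → A | ker f ∈ F}` (an equivalence
relation compatible with all pointwise `L_A`-operations).  Then the set `Z` of all `R ∈ 𝔅(F)`
such that any two elements of `Ω(A)^F` agreeing on `R` are `θ`-related is (i) closed under
binary intersections and upward closed within `𝔅(F)`, and (ii) for all `f, g ∈ Ω(A)^F`,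
`θ f g ↔ {i | f i = g i} ∈ Z`. -/
theorem stmt_4 (A : Type*) [Infinite A] (I : Type*) (F : Order.PFilter (Setoid I))
    (θ : {f : I → A // Setoid.ker f ∈ F} → {f : I → A // Setoid.ker f ∈ F} → Prop)
    (hEquiv : Equivalence θ)
    (hCompat : ∀ (n : ℕ) (g : (Fin n → A) → A)
      (u v : Fin n → {f : I → A // Setoid.ker f ∈ F})
      (hu : Setoid.ker (fun i : I => g fun k => (u k).1 i) ∈ F)
      (hv : Setoid.ker (fun i : I => g fun k => (v k).1 i) ∈ F),
      (∀ k, θ (u k) (v k)) → θ ⟨fun i => g fun k => (u k).1 i, hu⟩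
        ⟨fun i => g fun k => (v k).1 i, hv⟩) :
    (∀ R ∈ Zset F θ, ∀ S ∈ Zset F θ, R ∩ S ∈ Zset F θ) ∧
    (∀ R ∈ Zset F θ, ∀ S ∈ bAlg (F : Set (Setoid I)), R ⊆ S → S ∈ Zset F θ) ∧
    (∀ f g : {f : I → A // Setoid.ker f ∈ F},
      θ f g ↔ {i : I | f.1 i = g.1 i} ∈ Zset F θ) :=
  stmt_4_general A I F θ hEquiv hCompat
end

section
/- Let F be an order filter on Setoid I and let Z ⊆ 𝔅(F) be an ultrafilter on the Boolean algebra 𝔅(F): I ∈ Z, ∅ ∉ Z, Z is closed under binary intersections, Z is upward closed within 𝔅(F), and for every R ∈ 𝔅(F), either R ∈ Z or I \ R ∈ Z. Let θ_Z be the congruence on Ω(A)^F = {f : I → A | ker f ∈ F} given by θ_Z f g ↔ {i | f i = g i} ∈ Z. Then every congruence θ on Ω(A)^F that contains θ_Z (i.e., θ_Z f g implies θ f g) is either equal to θ_Z or relates all pairs of elements of Ω(A)^F. -/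
section

variable {I A : Type*} {F : Order.PFilter (Setoid I)}

local notation "Ω" => {f : I → A // Setoid.ker f ∈ F}

theorem preimage_mem_bAlg {β : Type*} {h : I → β} (hh : Setoid.ker h ∈ F) (V : Set β) :
    h ⁻¹' V ∈ bAlg (F : Set (Setoid I)) := by
  rcases (h ⁻¹' V).eq_empty_or_nonempty with hU | ⟨i₀, hi₀⟩
  · exact Or.inl hU
  · refine Or.inr ⟨Setoid.ker (· ∈ h ⁻¹' V), F.mem_of_le (fun i j hij => ?_) hh,
      i₀, ?_⟩
    · simp only [Setoid.ker_def, Set.mem_preimage] at hij ⊢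
      rw [hij]
    · ext j
      simp [Setoid.ker_def, hi₀]

theorem setOf_eq_mem_bAlg {β : Type*} {f g : I → β} (hf : Setoid.ker f ∈ F)
    (hg : Setoid.ker g ∈ F) : {i | f i = g i} ∈ bAlg (F : Set (Setoid I)) :=
  have hpair : Setoid.ker f ⊓ Setoid.ker g ≤ Setoid.ker fun i => (f i, g i) :=
    fun _ _ hij => Prod.ext hij.1 hij.2
  preimage_mem_bAlg (F.mem_of_le hpair (Order.PFilter.inf_mem hf hg)) {x | x.1 = x.2}

theorem ker_pointwise_mem {n : ℕ} (g : (Fin n → A) → A) (u : Fin n → Ω) :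
    Setoid.ker (fun i => g fun k => (u k).1 i) ∈ F := by
  have hinf : ⨅ k, Setoid.ker (u k).1 ∈ F :=
    Order.Ideal.iSup_mem (I := F.dual) fun k => (u k).2
  refine F.mem_of_le (fun i j hij => ?_) hinf
  have hcoord : ∀ k, (u k).1 i = (u k).1 j := fun k =>
    iInf_le (fun k => Setoid.ker (u k).1) k hij
  simp only [Setoid.ker_def, funext hcoord]

def applyPointwise {n : ℕ} (g : (Fin n → A) → A) (u : Fin n → Ω) : Ω :=
  ⟨fun i => g fun k => (u k).1 i, ker_pointwise_mem g u⟩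

open Classical in
noncomputable def condOp : (Fin 4 → A) → A := fun a => if a 0 = a 1 then a 2 else a 3

theorem rel_applyPointwise_condOp {θ : Ω → Ω → Prop} (hθ : Equivalence θ)
    (hcompat : ∀ (n : ℕ) (g : (Fin n → A) → A) (u v : Fin n → Ω),
      (∀ k, θ (u k) (v k)) → θ (applyPointwise g u) (applyPointwise g v))
    {f g : Ω} (hfg : θ f g) (p q : Ω) :
    θ p (applyPointwise condOp ![f, g, p, q]) := by
  have hp : applyPointwise condOp ![f, f, p, q] = p := by
    ext i
    simp [applyPointwise, condOp]
  have hrel := hcompat 4 condOp ![f, f, p, q] ![f, g, p, q] fun k => by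
    fin_cases k
    exacts [hθ.refl f, hfg, hθ.refl p, hθ.refl q]
  rwa [hp] at hrel

theorem applyPointwise_condOp_apply_of_ne (f g p q : Ω) {i : I} (hi : f.1 i ≠ g.1 i) :
    (applyPointwise condOp ![f, g, p, q]).1 i = q.1 i := by
  simp [applyPointwise, condOp, hi]

end

theorem stmt_17_general (A : Type*) (I : Type*) (F : Order.PFilter (Setoid I))
    (Z : Set (Set I))
    (hZup : ∀ R ∈ Z, ∀ S ∈ bAlg (F : Set (Setoid I)), R ⊆ S → S ∈ Z)
    (hZult : ∀ R ∈ bAlg (F : Set (Setoid I)), R ∈ Z ∨ Rᶜ ∈ Z)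
    (θ : {f : I → A // Setoid.ker f ∈ F} → {f : I → A // Setoid.ker f ∈ F} → Prop)
    (hEquiv : Equivalence θ)
    (hCompat : ∀ (n : ℕ) (g : (Fin n → A) → A)
      (u v : Fin n → {f : I → A // Setoid.ker f ∈ F})
      (hu : Setoid.ker (fun i : I => g fun k => (u k).1 i) ∈ F)
      (hv : Setoid.ker (fun i : I => g fun k => (v k).1 i) ∈ F),
      (∀ k, θ (u k) (v k)) → θ ⟨fun i => g fun k => (u k).1 i, hu⟩
        ⟨fun i => g fun k => (v k).1 i, hv⟩)
    (hcontain : ∀ f g : {f : I → A // Setoid.ker f ∈ F},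
      {i : I | f.1 i = g.1 i} ∈ Z → θ f g) :
    (∀ f g : {f : I → A // Setoid.ker f ∈ F},
      θ f g ↔ {i : I | f.1 i = g.1 i} ∈ Z) ∨
    (∀ f g : {f : I → A // Setoid.ker f ∈ F}, θ f g) := by
  by_cases hθ : ∀ f g : {f : I → A // Setoid.ker f ∈ F},
      θ f g → {i : I | f.1 i = g.1 i} ∈ Z
  · exact Or.inl fun f g => ⟨hθ f g, hcontain f g⟩
  push Not at hθ
  obtain ⟨f, g, hfg, hE⟩ := hθ
  have hEc : {i | f.1 i = g.1 i}ᶜ ∈ Z :=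
    (hZult _ (setOf_eq_mem_bAlg f.2 g.2)).resolve_left hE
  refine Or.inr fun p q => ?_
  set w := applyPointwise condOp ![f, g, p, q]
  have hpw : θ p w :=
    rel_applyPointwise_condOp hEquiv (fun n g u v => hCompat n g u v _ _) hfg p q
  have hwq : θ w q :=
    hcontain w q <| hZup _ hEc _ (setOf_eq_mem_bAlg w.2 q.2)
      fun i hi => applyPointwise_condOp_apply_of_ne f g p q hi
  exact hEquiv.trans hpw hwq

/-- Let `F` be an order filter on `Setoid I` and let `Z ⊆ 𝔅(F)` be an
ultrafilter on the Boolean algebra `𝔅(F)`.  Let `θ_Z` be the congruence on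
`Ω(A)^F = {f : I → A | ker f ∈ F}` given by `θ_Z f g ↔ {i | f i = g i} ∈ Z`.  Then every
congruence `θ` on `Ω(A)^F` containing `θ_Z` is either equal to `θ_Z` or relates all pairs. -/
theorem stmt_17 (A : Type*) [Infinite A] (I : Type*) (F : Order.PFilter (Setoid I))
    (Z : Set (Set I)) (hZB : Z ⊆ bAlg (F : Set (Setoid I)))
    (hZuniv : (Set.univ : Set I) ∈ Z) (hZempty : (∅ : Set I) ∉ Z)
    (hZinter : ∀ R ∈ Z, ∀ S ∈ Z, R ∩ S ∈ Z)
    (hZup : ∀ R ∈ Z, ∀ S ∈ bAlg (F : Set (Setoid I)), R ⊆ S → S ∈ Z)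
    (hZult : ∀ R ∈ bAlg (F : Set (Setoid I)), R ∈ Z ∨ Rᶜ ∈ Z)
    (θ : {f : I → A // Setoid.ker f ∈ F} → {f : I → A // Setoid.ker f ∈ F} → Prop)
    (hEquiv : Equivalence θ)
    (hCompat : ∀ (n : ℕ) (g : (Fin n → A) → A)
      (u v : Fin n → {f : I → A // Setoid.ker f ∈ F})
      (hu : Setoid.ker (fun i : I => g fun k => (u k).1 i) ∈ F)
      (hv : Setoid.ker (fun i : I => g fun k => (v k).1 i) ∈ F),
      (∀ k, θ (u k) (v k)) → θ ⟨fun i => g fun k => (u k).1 i, hu⟩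
        ⟨fun i => g fun k => (v k).1 i, hv⟩)
    (hcontain : ∀ f g : {f : I → A // Setoid.ker f ∈ F},
      {i : I | f.1 i = g.1 i} ∈ Z → θ f g) :
    (∀ f g : {f : I → A // Setoid.ker f ∈ F},
      θ f g ↔ {i : I | f.1 i = g.1 i} ∈ Z) ∨
    (∀ f g : {f : I → A // Setoid.ker f ∈ F}, θ f g) :=
  stmt_17_general A I F Z hZup hZult θ hEquiv hCompat hcontain
end
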